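/- arXiv:1507.02199 — 2 statements merged into one kernel-verified Lean document; each statement's English description precedes it below -/
import Mathlib

section
/- Every multigraph G with maximum degree Δ admits a proper edge coloring using at most ⌈(3/2)·Δ⌉ colors. Consequently, the edge set of any graph can be partitioned into at most ⌈(3/2)·Δ⌉ matchings. -/
/-!
Colour the edges one at a time with `k` colours, where `3Δ ≤ 2k + 1`. To colour a new edge `uv`,
note that `u` and `v` each miss at least `k - Δ + 1` colours. If they miss a common colour we are
done. Otherwise let `β` be missing at `v` and let `f = uw` be the `β`-edge at `u`. If `u` and `w`
miss a common colour `α`, recolour `f` with `α` and give `uv` the colour `β`. Otherwise, since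
`3(k - Δ) + 2 > k`, some colour `α` is missing at both `v` and `w`; pick `δ` missing at `u` and swap
`δ` and `α` on the `(δ, α)`-Kempe component of `u`. That component is a connected graph of maximum
degree `2`, so at most two of its vertices have degree `≤ 1`; as `u`, `v`, `w` all do, it misses
`v` or `w`. If it misses `v`, then `uv` gets `α`; if it misses `w`, recolour `f` with `α` as before.
-/

open Finset

theorem Set.not_disjoint_of_disjoint_of_card_lt {α : Type*} [Finite α] {s t r : Set α}
    (hst : Disjoint s t) (hsr : Disjoint s r) (h : Nat.card α < s.ncard + t.ncard + r.ncard) :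
    ¬ Disjoint t r := by
  intro htr
  have := Set.ncard_le_card (s ∪ t ∪ r)
  rw [Set.ncard_union_eq (Set.disjoint_union_left.2 ⟨hsr, htr⟩), Set.ncard_union_eq hst] at this
  omega

namespace SimpleGraph

variable {V : Type*} {G : SimpleGraph V}

theorem Connected.card_filter_degree_le_one_le_two [Fintype V] [DecidableRel G.Adj]
    (hG : G.Connected) (h2 : ∀ v, G.degree v ≤ 2) : #{v | G.degree v ≤ 1} ≤ 2 := by
  classical
  have hedges : Fintype.card V ≤ #G.edgeFinset + 1 := by
    simpa [Nat.card_eq_fintype_card, edgeFinset_card] using hG.card_vert_le_card_edgeSet_add_one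
  have hsum : ∑ v, (G.degree v + if G.degree v ≤ 1 then 1 else 0) ≤ 2 * Fintype.card V := by
    have := sum_le_card_nsmul univ (fun v => G.degree v + if G.degree v ≤ 1 then 1 else 0) 2
      fun v _ => by have := h2 v; split_ifs <;> omega
    rwa [card_univ, smul_eq_mul, mul_comm] at this
  rw [sum_add_distrib, ← card_filter, G.sum_degrees_eq_twice_card_edges] at hsum
  omega

theorem ConnectedComponent.ncard_setOf_ncard_neighborSet_le_one_le_two (C : G.ConnectedComponent)
    (hC : C.supp.Finite) (h2 : ∀ v ∈ C.supp, (G.neighborSet v).ncard ≤ 2) :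
    {v ∈ C.supp | (G.neighborSet v).ncard ≤ 1}.ncard ≤ 2 := by
  classical
  have := hC.fintype
  have hdeg : ∀ v : C, C.toSimpleGraph.degree v = (G.neighborSet v).ncard := by
    intro v
    rw [← card_neighborSet_eq_degree, ← Nat.card_eq_fintype_card, Nat.card_coe_set_eq,
      ← Set.ncard_image_of_injective _ Subtype.val_injective]
    congr 1
    ext w
    constructor
    · rintro ⟨w, hw, rfl⟩
      exact (C.toSimpleGraph_adj v.2 w.2).1 hw
    · intro hw
      have hwC : w ∈ C := C.mem_supp_of_adj_mem_supp v.2 hw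
      exact ⟨⟨w, hwC⟩, (C.toSimpleGraph_adj v.2 hwC).2 hw, rfl⟩
  calc {v ∈ C.supp | (G.neighborSet v).ncard ≤ 1}.ncard
      = (Subtype.val '' (({v | C.toSimpleGraph.degree v ≤ 1} : Finset C) : Set C)).ncard := by
        congr 1
        ext v
        constructor
        · rintro ⟨hv, h1⟩
          exact ⟨⟨v, hv⟩, by simpa [hdeg] using h1, rfl⟩
        · rintro ⟨v, hv, rfl⟩
          exact ⟨v.2, by simpa [hdeg] using hv⟩
    _ ≤ 2 := by
        rw [Set.ncard_image_of_injective _ Subtype.val_injective, Set.ncard_coe_finset]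
        exact C.connected_toSimpleGraph.card_filter_degree_le_one_le_two fun v =>
          (hdeg v).trans_le (h2 v v.2)

end SimpleGraph

namespace Multigraph

open SimpleGraph

variable {V E α : Type*} (ends : E → Sym2 V)

def IsProperEdgeColoring (c : E → α) : Prop :=
  ∀ e₁ e₂, e₁ ≠ e₂ → (∃ v, v ∈ ends e₁ ∧ v ∈ ends e₂) → c e₁ ≠ c e₂

def IsMissingAt (c : E → α) (x : V) (γ : α) : Prop :=
  ∀ e, x ∈ ends e → c e ≠ γ

noncomputable def degree (x : V) : ℕ := {e | x ∈ ends e}.ncard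

def ExtendsToEdge (α : Type*) (u v : V) : Prop :=
  ∃ c : E → α, IsProperEdgeColoring ends c ∧ ∃ γ, IsMissingAt ends c u γ ∧ IsMissingAt ends c v γ

variable {ends} {c : E → α}

theorem IsProperEdgeColoring.injOn (hc : IsProperEdgeColoring ends c) (x : V) :
    Set.InjOn c {e | x ∈ ends e} := fun e₁ h₁ e₂ h₂ h ↦ by
  by_contra hne
  exact hc e₁ e₂ hne ⟨x, h₁, h₂⟩ h

theorem IsProperEdgeColoring.ncard_setOf_isMissingAt [Finite α]
    (hc : IsProperEdgeColoring ends c) (x : V) :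
    {γ | IsMissingAt ends c x γ}.ncard = Nat.card α - degree ends x := by
  have : {γ | IsMissingAt ends c x γ} = (c '' {e | x ∈ ends e})ᶜ := by
    ext γ
    simp [IsMissingAt]
  rw [this, Set.ncard_compl, (hc.injOn x).ncard_image, degree]

theorem IsProperEdgeColoring.update_of_isMissingAt [DecidableEq E]
    (hc : IsProperEdgeColoring ends c) {f : E} {γ : α}
    (hγ : ∀ x ∈ ends f, IsMissingAt ends c x γ) :
    IsProperEdgeColoring ends (Function.update c f γ) := by
  rintro e₁ e₂ hne ⟨x, h₁, h₂⟩
  by_cases hf₁ : e₁ = f <;> by_cases hf₂ : e₂ = f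
  · exact absurd (hf₁.trans hf₂.symm) hne
  · subst hf₁
    simpa [hf₂] using (hγ x h₁ e₂ h₂).symm
  · subst hf₂
    simpa [hf₁] using hγ x h₂ e₁ h₁
  · simpa [hf₁, hf₂] using hc e₁ e₂ hne ⟨x, h₁, h₂⟩

theorem extendsToEdge_of_recolor (hc : IsProperEdgeColoring ends c) {f : E} {u v w : V} {γ : α}
    (hf : ends f = s(u, w)) (hu : IsMissingAt ends c u γ) (hw : IsMissingAt ends c w γ)
    (hv : IsMissingAt ends c v (c f)) : ExtendsToEdge ends α u v := by
  classical
  have huf : u ∈ ends f := hf ▸ Sym2.mem_mk_left u w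
  refine ⟨Function.update c f γ, hc.update_of_isMissingAt fun x hx ↦ ?_, c f, ?_, ?_⟩
  · rw [hf, Sym2.mem_iff] at hx
    rcases hx with rfl | rfl
    exacts [hu, hw]
  · intro e he
    rcases eq_or_ne e f with rfl | hef
    · simpa using (hu e huf).symm
    · simpa [hef] using hc e f hef ⟨u, he, huf⟩
  · intro e he
    have hef : e ≠ f := by rintro rfl; exact hv e he rfl
    simpa [hef] using hv e he

variable (ends) in
theorem finite_setOf_exists_mem [Finite E] : {x | ∃ e, x ∈ ends e}.Finite := by
  classical
  have : {x | ∃ e, x ∈ ends e} = ⋃ e, ((ends e).toFinset : Set V) := by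
    ext x
    simp [Sym2.mem_toFinset]
  rw [this]
  exact Set.finite_iUnion fun e ↦ (ends e).toFinset.finite_toSet

variable (ends c) in
def kempeGraph (a b : α) : SimpleGraph V :=
  fromEdgeSet {z | ∃ e, ends e = z ∧ (c e = a ∨ c e = b)}

theorem kempeGraph_adj {a b : α} {x y : V} :
    (kempeGraph ends c a b).Adj x y ↔ x ≠ y ∧ ∃ e, ends e = s(x, y) ∧ (c e = a ∨ c e = b) := by
  simp [kempeGraph, and_comm]

variable (ends c) in
open scoped Classical in
noncomputable def kempeSwap [DecidableEq α] (a b : α) (u : V) : E → α := fun e ↦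
  if ∃ x ∈ ends e, (kempeGraph ends c a b).Reachable u x then Equiv.swap a b (c e) else c e

section KempeSwap

variable [DecidableEq α] {a b : α} {u x : V} {e : E}

theorem kempeSwap_of_reachable (hx : x ∈ ends e) (hux : (kempeGraph ends c a b).Reachable u x) :
    kempeSwap ends c a b u e = Equiv.swap a b (c e) :=
  if_pos ⟨x, hx, hux⟩

theorem kempeSwap_of_not_reachable (hx : x ∈ ends e)
    (hux : ¬ (kempeGraph ends c a b).Reachable u x) : kempeSwap ends c a b u e = c e := by
  unfold kempeSwap
  split_ifs with h
  · obtain ⟨y, hy, huy⟩ := h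
    have hyx : y ≠ x := by rintro rfl; exact hux huy
    have hab : c e ≠ a ∧ c e ≠ b := by
      refine not_or.mp fun hab ↦ hux (huy.trans (Adj.reachable ?_))
      exact kempeGraph_adj.2 ⟨hyx, e, ((Sym2.mem_and_mem_iff hyx).1 ⟨hy, hx⟩), hab⟩
    exact Equiv.swap_apply_of_ne_of_ne hab.1 hab.2
  · rfl

theorem IsProperEdgeColoring.kempeSwap (hc : IsProperEdgeColoring ends c) (a b : α) (u : V) :
    IsProperEdgeColoring ends (kempeSwap ends c a b u) := by
  rintro e₁ e₂ hne ⟨x, h₁, h₂⟩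
  by_cases hux : (kempeGraph ends c a b).Reachable u x
  · rw [kempeSwap_of_reachable h₁ hux, kempeSwap_of_reachable h₂ hux]
    exact (Equiv.swap a b).injective.ne (hc e₁ e₂ hne ⟨x, h₁, h₂⟩)
  · rw [kempeSwap_of_not_reachable h₁ hux, kempeSwap_of_not_reachable h₂ hux]
    exact hc e₁ e₂ hne ⟨x, h₁, h₂⟩

theorem isMissingAt_kempeSwap_of_reachable {γ : α}
    (hux : (kempeGraph ends c a b).Reachable u x) :
    IsMissingAt ends (kempeSwap ends c a b u) x γ ↔ IsMissingAt ends c x (Equiv.swap a b γ) :=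
  forall₂_congr fun e hx ↦ by rw [kempeSwap_of_reachable hx hux, Ne, Equiv.swap_apply_eq_iff]

theorem isMissingAt_kempeSwap_of_not_reachable {γ : α}
    (hux : ¬ (kempeGraph ends c a b).Reachable u x) :
    IsMissingAt ends (kempeSwap ends c a b u) x γ ↔ IsMissingAt ends c x γ :=
  forall₂_congr fun e hx ↦ by rw [kempeSwap_of_not_reachable hx hux]

end KempeSwap

theorem IsProperEdgeColoring.ncard_neighborSet_kempeGraph_le [Finite E]
    (hc : IsProperEdgeColoring ends c) {a b : α} (x : V) (t : Finset α)
    (ht : ∀ e, x ∈ ends e → (c e = a ∨ c e = b) → c e ∈ t) :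
    ((kempeGraph ends c a b).neighborSet x).ncard ≤ t.card := by
  set S := {e | x ∈ ends e ∧ (c e = a ∨ c e = b)}
  calc ((kempeGraph ends c a b).neighborSet x).ncard
      = ((fun y ↦ s(x, y)) '' (kempeGraph ends c a b).neighborSet x).ncard :=
        (Set.ncard_image_of_injective _ fun _ _ ↦ Sym2.congr_right.1).symm
    _ ≤ (ends '' S).ncard := by
        refine Set.ncard_le_ncard ?_ ((Set.toFinite S).image ends)
        rintro _ ⟨y, hy, rfl⟩
        obtain ⟨-, e, he, hab⟩ := kempeGraph_adj.1 hy
        exact ⟨e, ⟨he ▸ Sym2.mem_mk_left x y, hab⟩, he⟩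
    _ ≤ S.ncard := Set.ncard_image_le
    _ = (c '' S).ncard := ((hc.injOn x).mono fun _ he ↦ he.1).ncard_image.symm
    _ ≤ t.card := by
        rw [← Set.ncard_coe_finset t]
        exact Set.ncard_le_ncard (by rintro _ ⟨e, he, rfl⟩; exact ht e he.1 he.2)

theorem IsProperEdgeColoring.not_reachable_kempeGraph [Finite E]
    (hc : IsProperEdgeColoring ends c) {a b : α} {u v w : V}
    (huv : u ≠ v) (huw : u ≠ w) (hvw : v ≠ w)
    (hu : IsMissingAt ends c u a ∨ IsMissingAt ends c u b)
    (hv : IsMissingAt ends c v a ∨ IsMissingAt ends c v b)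
    (hw : IsMissingAt ends c w a ∨ IsMissingAt ends c w b)
    (hrv : (kempeGraph ends c a b).Reachable u v) : ¬ (kempeGraph ends c a b).Reachable u w := by
  classical
  intro hrw
  set H := kempeGraph ends c a b
  set C := H.connectedComponentMk u
  have hmem {x : V} (h : H.Reachable u x) : x ∈ C.supp := ConnectedComponent.eq.2 h.symm
  have hC : C.supp.Finite := by
    refine ((finite_setOf_exists_mem ends).insert u).subset fun x hx ↦ ?_
    rcases eq_or_ne x u with rfl | hxu
    · exact Set.mem_insert _ _
    obtain ⟨y, hy⟩ := (mem_support H).1 (mem_support_of_reachable hxu (ConnectedComponent.eq.1 hx))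
    obtain ⟨-, e, he, -⟩ := kempeGraph_adj.1 hy
    exact Or.inr ⟨e, he ▸ Sym2.mem_mk_left x y⟩
  have hlow (x : V) (hx : IsMissingAt ends c x a ∨ IsMissingAt ends c x b) :
      (H.neighborSet x).ncard ≤ 1 := by
    rcases hx with hxa | hxb
    · exact hc.ncard_neighborSet_kempeGraph_le x {b} fun e hx hab ↦ by
        simpa using hab.resolve_left (hxa e hx)
    · exact hc.ncard_neighborSet_kempeGraph_le x {a} fun e hx hab ↦ by
        simpa using hab.resolve_right (hxb e hx)
  have hle := C.ncard_setOf_ncard_neighborSet_le_one_le_two hC fun x _ ↦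
    (hc.ncard_neighborSet_kempeGraph_le x {a, b} fun e _ hab ↦ by simpa using hab).trans
      card_le_two
  have h3 : ({u, v, w} : Set V) ⊆ {x ∈ C.supp | (H.neighborSet x).ncard ≤ 1} := by
    rintro x (rfl | rfl | rfl)
    exacts [⟨hmem (Reachable.refl _), hlow _ hu⟩, ⟨hmem hrv, hlow _ hv⟩, ⟨hmem hrw, hlow _ hw⟩]
  have := Set.ncard_le_ncard h3 (hC.subset fun x hx ↦ hx.1)
  rw [Set.ncard_eq_three.2 ⟨u, v, w, huv, huw, hvw, rfl⟩] at this
  omega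

theorem extendsToEdge_of_kempe [Finite E] (hc : IsProperEdgeColoring ends c) {f : E}
    {u v w : V} {δ γ : α} (hf : ends f = s(u, w)) (huv : u ≠ v) (huw : u ≠ w)
    (hδ : IsMissingAt ends c u δ) (hv : IsMissingAt ends c v γ) (hw : IsMissingAt ends c w γ)
    (hfv : IsMissingAt ends c v (c f)) : ExtendsToEdge ends α u v := by
  classical
  have huf : u ∈ ends f := hf ▸ Sym2.mem_mk_left u w
  have hwf : w ∈ ends f := hf ▸ Sym2.mem_mk_right u w
  have hvw : v ≠ w := by rintro rfl; exact hfv f hwf rfl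
  have hc' := hc.kempeSwap δ γ u
  have hu' : IsMissingAt ends (kempeSwap ends c δ γ u) u γ := by
    rwa [isMissingAt_kempeSwap_of_reachable (Reachable.refl u), Equiv.swap_apply_right]
  by_cases hrv : (kempeGraph ends c δ γ).Reachable u v
  · have hrw := hc.not_reachable_kempeGraph huv huw hvw (.inl hδ) (.inr hv) (.inr hw) hrv
    refine extendsToEdge_of_recolor hc' hf hu'
      ((isMissingAt_kempeSwap_of_not_reachable hrw).2 hw) ?_
    rwa [kempeSwap_of_not_reachable hwf hrw, isMissingAt_kempeSwap_of_reachable hrv,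
      Equiv.swap_apply_of_ne_of_ne (hδ f huf) (hw f hwf)]
  · exact ⟨_, hc', γ, hu', (isMissingAt_kempeSwap_of_not_reachable hrv).2 hv⟩

theorem IsProperEdgeColoring.extendsToEdge [Finite E] [Finite α]
    (hc : IsProperEdgeColoring ends c) {Δ : ℕ} (hk : 3 * Δ ≤ 2 * Nat.card α + 1)
    (hΔ : ∀ x, degree ends x ≤ Δ) {u v : V} (hu : degree ends u < Δ) (hv : degree ends v < Δ) :
    ExtendsToEdge ends α u v := by
  set M := fun x ↦ {γ | IsMissingAt ends c x γ}
  have hM (x : V) : (M x).ncard = Nat.card α - degree ends x := hc.ncard_setOf_isMissingAt x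
  have hM_ne (x : V) (hx : degree ends x < Δ) : (M x).Nonempty :=
    Set.nonempty_of_ncard_ne_zero (by rw [hM]; omega)
  by_cases huv : Disjoint (M u) (M v)
  swap
  · obtain ⟨γ, hγu, hγv⟩ := Set.not_disjoint_iff.1 huv
    exact ⟨c, hc, γ, hγu, hγv⟩
  obtain ⟨δ, hδ⟩ := hM_ne u hu
  obtain ⟨β, hβ⟩ := hM_ne v hv
  obtain ⟨f, huf, rfl⟩ : ∃ f, u ∈ ends f ∧ c f = β := by
    by_contra! h
    exact Set.disjoint_right.1 huv hβ h
  obtain ⟨w, hf⟩ := Sym2.mem_iff_exists.1 huf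
  by_cases huw : Disjoint (M u) (M w)
  swap
  · obtain ⟨γ, hγu, hγw⟩ := Set.not_disjoint_iff.1 huw
    exact extendsToEdge_of_recolor hc hf hγu hγw hβ
  obtain ⟨γ, hγv, hγw⟩ := Set.not_disjoint_iff.1 <|
    Set.not_disjoint_of_disjoint_of_card_lt huv huw <| by
      rw [hM, hM, hM]
      have := hΔ w
      omega
  exact extendsToEdge_of_kempe hc hf (by rintro rfl; exact Set.disjoint_left.1 huv hδ hδ)
    (by rintro rfl; exact Set.disjoint_left.1 huw hδ hδ) hδ hγv hγw hβ

theorem degree_subtype_ne (e₀ : E) (x : V) :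
    degree (fun e : {e // e ≠ e₀} ↦ ends e) x = ({e | x ∈ ends e} \ {e₀}).ncard := by
  rw [degree, ← Set.ncard_image_of_injective _ Subtype.val_injective]
  congr 1
  ext e
  simp [and_comm]

theorem IsProperEdgeColoring.extend [DecidableEq E] {e₀ : E} {c₀ : {e // e ≠ e₀} → α}
    (hc : IsProperEdgeColoring (fun e : {e // e ≠ e₀} ↦ ends e) c₀) {γ : α}
    (hγ : ∀ x ∈ ends e₀, IsMissingAt (fun e : {e // e ≠ e₀} ↦ ends e) c₀ x γ) :
    IsProperEdgeColoring ends fun e ↦ if h : e = e₀ then γ else c₀ ⟨e, h⟩ := by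
  rintro e₁ e₂ hne ⟨x, h₁, h₂⟩
  by_cases hf₁ : e₁ = e₀ <;> by_cases hf₂ : e₂ = e₀
  · exact absurd (hf₁.trans hf₂.symm) hne
  · subst hf₁
    simpa [hf₂] using (hγ x h₁ ⟨e₂, hf₂⟩ h₂).symm
  · subst hf₂
    simpa [hf₁] using hγ x h₂ ⟨e₁, hf₁⟩ h₁
  · simpa [hf₁, hf₂] using hc ⟨e₁, hf₁⟩ ⟨e₂, hf₂⟩ (by simpa using hne) ⟨x, h₁, h₂⟩

variable (ends) in
theorem exists_isProperEdgeColoring [Finite E] [Finite α] {Δ : ℕ}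
    (hk : 3 * Δ ≤ 2 * Nat.card α + 1) (hΔ : ∀ x, degree ends x ≤ Δ) :
    ∃ c : E → α, IsProperEdgeColoring ends c := by
  classical
  induction hn : Nat.card E generalizing E with
  | zero =>
    have : IsEmpty E := Finite.card_eq_zero_iff.1 hn
    exact ⟨isEmptyElim, fun e ↦ isEmptyElim e⟩
  | succ n ih =>
    obtain ⟨e₀⟩ : Nonempty E := (Nat.card_pos_iff.1 (by omega)).1
    obtain ⟨u, v, huv⟩ : ∃ u v, ends e₀ = s(u, v) := ⟨_, _, (Quot.out_eq (ends e₀)).symm⟩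
    set ends' := fun e : {e // e ≠ e₀} ↦ ends e
    have hdeg (x : V) : degree ends' x ≤ degree ends x :=
      (degree_subtype_ne e₀ x).trans_le (Set.ncard_sdiff_singleton_le _ _)
    have hdeg_lt (x : V) (hx : x ∈ ends e₀) : degree ends' x < Δ :=
      ((degree_subtype_ne e₀ x).trans_lt (Set.ncard_sdiff_singleton_lt_of_mem hx)).trans_le (hΔ x)
    have hcard : Nat.card {e // e ≠ e₀} = n := by
      change ({e₀}ᶜ : Set E).ncard = n
      rw [Set.ncard_compl, Set.ncard_singleton, hn, Nat.add_sub_cancel]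
    obtain ⟨c, hc⟩ := ih ends' (fun x ↦ (hdeg x).trans (hΔ x)) hcard
    obtain ⟨c', hc', γ, hu, hv⟩ := hc.extendsToEdge hk (fun x ↦ (hdeg x).trans (hΔ x))
      (hdeg_lt u (huv ▸ Sym2.mem_mk_left u v)) (hdeg_lt v (huv ▸ Sym2.mem_mk_right u v))
    refine ⟨_, hc'.extend (γ := γ) fun x hx ↦ ?_⟩
    rw [huv, Sym2.mem_iff] at hx
    rcases hx with rfl | rfl
    exacts [hu, hv]

end Multigraph

theorem stmt_4_general {V E : Type*} [Finite E] (ends : E → Sym2 V)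
    (Δ : ℕ) (hΔ : ∀ v : V, Nat.card {e : E | v ∈ ends e} ≤ Δ) :
    ∃ c : E → Fin ((3 * Δ + 1) / 2), ∀ e₁ e₂ : E, e₁ ≠ e₂ →
      (∃ v, v ∈ ends e₁ ∧ v ∈ ends e₂) → c e₁ ≠ c e₂ :=
  Multigraph.exists_isProperEdgeColoring ends (by rw [Nat.card_fin]; omega) hΔ

/-- Shannon's theorem: every loopless multigraph with maximum degree at most `Δ`
admits a proper edge coloring with at most `⌈(3/2)·Δ⌉ = (3Δ+1)/2` colors; the color
classes of such a coloring partition the edge set into at most that many matchings. -/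
theorem stmt_4 {V E : Type*} [Finite E] (ends : E → Sym2 V)
    (hloopless : ∀ e : E, ¬ (ends e).IsDiag)
    (Δ : ℕ) (hΔ : ∀ v : V, Nat.card {e : E | v ∈ ends e} ≤ Δ) :
    ∃ c : E → Fin ((3 * Δ + 1) / 2), ∀ e₁ e₂ : E, e₁ ≠ e₂ →
      (∃ v, v ∈ ends e₁ ∧ v ∈ ends e₂) → c e₁ ≠ c e₂ :=
  stmt_4_general ends Δ hΔ
end

section
/- For a simple graph G, the chromatic index χ'(G) satisfies Δ(G) ≤ χ'(G) ≤ Δ(G) + 1. -/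
/-!
Colour the edges one at a time. Every vertex has degree less than the number of colours, so in
any partial colouring every vertex misses some colour. To colour an uncoloured edge `x y`, take a
maximal fan `y = f 0, f 1, …, f k` of neighbours of `x` in which the colour of `x (f (i+1))` is
missing at `f i`. Rotating the fan (giving each `x (f i)` the colour of `x (f (i+1))`) keeps the
colouring proper, so it suffices to find a colour missing both at `x` and at the end of a fan.
Let `α` be missing at `x` and `β` at `f k`. If `β` is missing at `x`, rotate. Otherwise, by
maximality, `β` is the colour of some `x (f (i+1))`, so `β` is missing at `f i` as well. The
`αβ`-subgraph has maximum degree two and `x`, `f i`, `f k` have degree at most one in it, so they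
are not all in one component. Swapping `α` and `β` on the component of `f k` or of `f i`,
whichever avoids `x`, makes `α` missing at the end of the whole fan or of its prefix up to `f i`,
and keeps that (prefix of the) fan a fan.

The lower bound holds because the edges at a vertex pairwise share that vertex.
-/

open Function

namespace SimpleGraph

variable {V : Type*} {K : SimpleGraph V}

theorem Walk.IsPath.eq_of_subsingleton_neighborSet
    (hK : ∀ v a b c, K.Adj v a → K.Adj v b → K.Adj v c → a = b ∨ a = c ∨ b = c)
    {u b c a : V} {p : K.Walk u b} {q : K.Walk u c} (hp : p.IsPath) (hq : q.IsPath)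
    (hb : (K.neighborSet b).Subsingleton) (hc : (K.neighborSet c).Subsingleton)
    (ha : K.Adj u a) (hap : a ∉ p.support) (haq : a ∉ q.support) : b = c := by
  induction p generalizing a c with
  | nil =>
    cases q with
    | nil => rfl
    | cons h q' => exact absurd (by simp [hb ha h]) haq
  | cons h p' ih =>
    cases q with
    | nil => exact absurd (by simp [hc ha h]) hap
    | cons h' q' =>
      rw [Walk.cons_isPath_iff] at hp hq
      rcases hK _ _ _ _ ha h h' with rfl | rfl | rfl
      · exact absurd (by simp) hap
      · exact absurd (by simp) haq
      · exact ih hp.1 hq.1 hb hc h.symm hp.2 hq.2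

theorem Reachable.eq_of_subsingleton_neighborSet
    (hK : ∀ v a b c, K.Adj v a → K.Adj v b → K.Adj v c → a = b ∨ a = c ∨ b = c)
    {x b c : V} (hx : (K.neighborSet x).Subsingleton) (hb : (K.neighborSet b).Subsingleton)
    (hc : (K.neighborSet c).Subsingleton) (hxb : x ≠ b) (hxc : x ≠ c)
    (hrb : K.Reachable x b) (hrc : K.Reachable x c) : b = c := by
  classical
  obtain ⟨p, hp⟩ := hrb.some.toPath
  obtain ⟨q, hq⟩ := hrc.some.toPath
  cases p with
  | nil => exact absurd rfl hxb
  | cons h p' =>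
    cases q with
    | nil => exact absurd rfl hxc
    | cons h' q' =>
      obtain rfl := hx h h'
      rw [Walk.cons_isPath_iff] at hp hq
      exact hp.1.eq_of_subsingleton_neighborSet hK hq.1 hb hc h.symm hp.2 hq.2

end SimpleGraph

namespace Vizing

open SimpleGraph

variable {V κ : Type*}

/-- Partial edge colourings are maps `Sym2 V → Option κ`, with `none` for uncoloured. -/
def Proper (C : Sym2 V → Option κ) : Prop :=
  ∀ ⦃v u w : V⦄ ⦃a : κ⦄, C s(v, u) = some a → C s(v, w) = some a → u = w

def Missing (C : Sym2 V → Option κ) (v : V) (a : κ) : Prop :=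
  ∀ u, C s(v, u) ≠ some a

variable {C : Sym2 V → Option κ} {x y u v : V} {a b c : κ}

section Update

variable [DecidableEq V]

theorem Proper.update_none (hC : Proper C) (e : Sym2 V) : Proper (update C e none) := by
  intro v u w a hu hw
  rw [update_apply] at hu hw
  split_ifs at hu hw
  exact hC hu hw

theorem Proper.update_some (hC : Proper C) (hu : Missing C u a)
    (hv : Missing C v a) : Proper (update C s(u, v) (some a)) := by
  intro z w w' b hw hw'
  have hz : ∀ t, s(z, t) = s(u, v) → Missing C z a := by
    intro t h
    rcases Sym2.eq_iff.mp h with ⟨rfl, -⟩ | ⟨rfl, -⟩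
    exacts [hu, hv]
  rw [update_apply] at hw hw'
  by_cases h : s(z, w) = s(u, v) <;> by_cases h' : s(z, w') = s(u, v) <;>
    simp only [h, h', if_true, if_false, Option.some_inj] at hw hw'
  · exact Sym2.congr_right.mp (h.trans h'.symm)
  · exact absurd (hw ▸ hw') (hz w h w')
  · exact absurd (hw' ▸ hw) (hz w' h' w)
  · exact hC hw hw'

theorem Missing.update (h : Missing C v a) {e : Sym2 V} {c : Option κ}
    (hc : v ∈ e → c ≠ some a) : Missing (update C e c) v a := by
  intro u
  rw [update_apply]
  split_ifs with he
  · exact hc (he ▸ Sym2.mem_mk_left v u)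
  · exact h u

theorem Proper.missing_update_none (hC : Proper C) (h : C s(v, u) = some a) :
    Missing (update C s(v, u) none) v a := by
  intro w hw
  rw [update_apply] at hw
  split_ifs at hw with he
  exact he (by rw [hC h hw])

end Update

section KempeGraph

variable (C) (α β : κ) in
def kempeGraph : SimpleGraph V where
  Adj a b := a ≠ b ∧ (C s(a, b) = some α ∨ C s(a, b) = some β)
  symm := ⟨fun a b h => ⟨h.1.symm, by rw [Sym2.eq_swap]; exact h.2⟩⟩
  loopless := ⟨fun a h => h.1 rfl⟩

variable {α β : κ}

theorem reachable_kempeGraph_of_color (h : (kempeGraph C α β).Reachable u v) {w : V}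
    (hc : C s(v, w) = some α ∨ C s(v, w) = some β) : (kempeGraph C α β).Reachable u w := by
  obtain rfl | hvw := eq_or_ne v w
  · exact h
  · exact h.trans (Adj.reachable ⟨hvw, hc⟩)

theorem Proper.eq_or_eq_or_eq_of_kempeGraph_adj (hC : Proper C) (v a b c : V)
    (ha : (kempeGraph C α β).Adj v a) (hb : (kempeGraph C α β).Adj v b)
    (hc : (kempeGraph C α β).Adj v c) : a = b ∨ a = c ∨ b = c := by
  obtain ⟨-, ha | ha⟩ := ha <;> obtain ⟨-, hb | hb⟩ := hb <;>
    obtain ⟨-, hc | hc⟩ := hc <;>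
    first
      | exact .inl (hC ha hb)
      | exact .inr (.inl (hC ha hc))
      | exact .inr (.inr (hC hb hc))

theorem Proper.subsingleton_neighborSet_kempeGraph (hC : Proper C)
    (h : Missing C v α ∨ Missing C v β) :
    ((kempeGraph C α β).neighborSet v).Subsingleton := by
  rintro a ⟨-, ha⟩ b ⟨-, hb⟩
  rcases h with h | h
  · exact hC (ha.resolve_left (h a)) (hb.resolve_left (h b))
  · exact hC (ha.resolve_right (h a)) (hb.resolve_right (h b))

end KempeGraph

section Kempe

variable [DecidableEq κ]

open Classical in
variable (C) (α β : κ) in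
noncomputable def kempeSwap (u : V) (e : Sym2 V) : Option κ :=
  if ∃ v ∈ e, (kempeGraph C α β).Reachable u v then (C e).map (Equiv.swap α β) else C e

variable {α β γ : κ}

theorem kempeSwap_apply_of_reachable (h : (kempeGraph C α β).Reachable u v) (w : V) :
    kempeSwap C α β u s(v, w) = (C s(v, w)).map (Equiv.swap α β) :=
  if_pos ⟨v, Sym2.mem_mk_left v w, h⟩

theorem kempeSwap_apply_of_not_reachable (h : ¬ (kempeGraph C α β).Reachable u v) (w : V) :
    kempeSwap C α β u s(v, w) = C s(v, w) := by
  unfold kempeSwap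
  split_ifs with he
  · obtain ⟨z, hz, hrz⟩ := he
    rcases Sym2.mem_iff.mp hz with rfl | rfl
    · exact absurd hrz h
    · cases hc : C s(v, z) with
      | none => rfl
      | some a =>
        refine congrArg some (Equiv.swap_apply_of_ne_of_ne ?_ ?_) <;> rintro rfl <;>
          refine h (reachable_kempeGraph_of_color hrz ?_) <;> rw [Sym2.eq_swap] <;> simp [hc]
  · rfl

theorem kempeSwap_ne_none_iff (e : Sym2 V) : kempeSwap C α β u e ≠ none ↔ C e ≠ none := by
  unfold kempeSwap
  split_ifs <;> simp

theorem Proper.kempeSwap (hC : Proper C) (u : V) : Proper (kempeSwap C α β u) := by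
  intro v w w' a hw hw'
  by_cases hv : (kempeGraph C α β).Reachable u v
  · rw [kempeSwap_apply_of_reachable hv] at hw hw'
    obtain ⟨b, hb, rfl⟩ := Option.map_eq_some_iff.mp hw
    obtain ⟨b', hb', hbb⟩ := Option.map_eq_some_iff.mp hw'
    rw [(Equiv.swap α β).injective hbb] at hb'
    exact hC hb hb'
  · rw [kempeSwap_apply_of_not_reachable hv] at hw hw'
    exact hC hw hw'

theorem Missing.kempeSwap_of_not_reachable (h : Missing C v γ)
    (hv : ¬ (kempeGraph C α β).Reachable u v) : Missing (kempeSwap C α β u) v γ := by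
  intro w
  rw [kempeSwap_apply_of_not_reachable hv]
  exact h w

theorem Missing.kempeSwap_of_ne (h : Missing C v γ) (hα : γ ≠ α) (hβ : γ ≠ β) (u : V) :
    Missing (kempeSwap C α β u) v γ := by
  by_cases hv : (kempeGraph C α β).Reachable u v
  · intro w hw
    rw [kempeSwap_apply_of_reachable hv, Option.map_eq_some_iff] at hw
    obtain ⟨b, hb, hbγ⟩ := hw
    rw [Equiv.swap_apply_eq_iff, Equiv.swap_apply_of_ne_of_ne hα hβ] at hbγ
    exact h w (hbγ ▸ hb)
  · exact h.kempeSwap_of_not_reachable hv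

theorem Missing.kempeSwap_self (h : Missing C u β) : Missing (kempeSwap C α β u) u α := by
  intro w hw
  rw [kempeSwap_apply_of_reachable .rfl, Option.map_eq_some_iff] at hw
  obtain ⟨b, hb, hbα⟩ := hw
  rw [Equiv.swap_apply_eq_iff, Equiv.swap_apply_left] at hbα
  exact h w (hbα ▸ hb)

end Kempe

section Fan

/-- The fan consists of `f 0, …, f k`; the values of `f` beyond `k` play no role. -/
structure IsFan (C : Sym2 V → Option κ) (x : V) (f : ℕ → V) (k : ℕ) : Prop where
  ne : ∀ i ≤ k, f i ≠ x
  injOn : Set.InjOn f (Set.Iic k)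
  step : ∀ i < k, ∃ c, C s(x, f (i + 1)) = some c ∧ Missing C (f i) c

variable {f : ℕ → V} {k : ℕ}

theorem IsFan.mono (hf : IsFan C x f k) {l : ℕ} (hl : l ≤ k) : IsFan C x f l where
  ne i hi := hf.ne i (hi.trans hl)
  injOn := hf.injOn.mono (Set.Iic_subset_Iic.mpr hl)
  step i hi := hf.step i (hi.trans_le hl)

theorem IsFan.edge_ne (hf : IsFan C x f k) {i j : ℕ} (hi : i ≤ k) (hj : j ≤ k)
    (hij : i ≠ j) : s(x, f i) ≠ s(x, f j) :=
  fun h => hij (hf.injOn hi hj (Sym2.congr_right.mp h))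

theorem IsFan.notMem_edge (hf : IsFan C x f k) {i j : ℕ} (hi : i ≤ k) (hj : j ≤ k)
    (hij : i ≠ j) : f i ∉ s(x, f j) := by
  rw [Sym2.mem_iff, not_or]
  exact ⟨hf.ne i hi, fun h => hij (hf.injOn hi hj h)⟩

theorem IsFan.eq_of_color_eq (hC : Proper C) (hf : IsFan C x f k) {i j : ℕ} (hi : i < k)
    (hj : j < k) (h : C s(x, f (i + 1)) = some c) (h' : C s(x, f (j + 1)) = some c) : i = j :=
  Nat.succ_injective (hf.injOn (Set.mem_Iic.mpr hi) (Set.mem_Iic.mpr hj) (hC h h'))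

theorem IsFan.succ_le_card [Fintype V] (hf : IsFan C x f k) : k + 1 ≤ Fintype.card V := by
  simpa using Fintype.card_le_of_injective (fun i : Fin (k + 1) => f i)
    fun i j h => Fin.ext (hf.injOn (Nat.lt_succ_iff.mp i.2) (Nat.lt_succ_iff.mp j.2) h)

theorem IsFan.snoc [DecidableEq V] (hf : IsFan C x f k) {z : V} (hzx : z ≠ x)
    (hz : ∀ i ≤ k, f i ≠ z) (hc : C s(x, z) = some c) (hm : Missing C (f k) c) :
    IsFan C x (update f (k + 1) z) (k + 1) := by
  have hf' : ∀ i ≤ k, update f (k + 1) z i = f i := fun i hi => update_of_ne (by omega) _ _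
  refine ⟨fun i hi => ?_, fun i hi j hj h => ?_, fun i hi => ?_⟩
  · obtain rfl | hi := eq_or_lt_of_le hi
    · simpa using hzx
    · simpa [hf' i (Nat.lt_succ_iff.mp hi)] using hf.ne i (Nat.lt_succ_iff.mp hi)
  · simp only [Set.mem_Iic] at hi hj
    obtain rfl | hi := eq_or_lt_of_le hi <;> obtain rfl | hj := eq_or_lt_of_le hj
    · rfl
    · rw [update_self, hf' j (by omega)] at h
      exact absurd h.symm (hz j (by omega))
    · rw [update_self, hf' i (by omega)] at h
      exact absurd h (hz i (by omega))
    · rw [hf' i (by omega), hf' j (by omega)] at h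
      exact hf.injOn (Set.mem_Iic.mpr (by omega)) (Set.mem_Iic.mpr (by omega)) h
  · obtain rfl | hi := eq_or_lt_of_le (Nat.lt_succ_iff.mp hi)
    · exact ⟨c, by simpa using hc, by simpa [hf' i le_rfl] using hm⟩
    · simpa [hf' i hi.le, hf' (i + 1) hi] using hf.step i hi

theorem exists_maximal_isFan [Fintype V] (hyx : y ≠ x) :
    ∃ f k, f 0 = y ∧ IsFan C x f k ∧
      ∀ g : ℕ → V, g 0 = y → ¬ IsFan C x g (k + 1) := by
  classical
  let P k := ∃ f : ℕ → V, f 0 = y ∧ IsFan C x f k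
  have hex : ∃ k, ¬ P (k + 1) :=
    ⟨Fintype.card V, fun ⟨_, _, hf⟩ => by have := hf.succ_le_card; omega⟩
  obtain ⟨f, hf0, hf⟩ : P (Nat.find hex) := by
    rcases h : Nat.find hex with _ | k
    · exact ⟨fun _ => y, rfl, fun _ _ => hyx, fun i hi j hj _ => by simp_all, by simp⟩
    · simpa using Nat.find_min hex (h ▸ k.lt_succ_self)
  exact ⟨f, Nat.find hex, hf0, hf, fun g hg0 hg => Nat.find_spec hex ⟨g, hg0, hg⟩⟩

theorem IsFan.tail_update [DecidableEq V] (hf : IsFan C x f (k + 1)) (o : Option κ) :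
    IsFan (update (update C s(x, f 1) none) s(x, f 0) o) x (fun i => f (i + 1)) k where
  ne i hi := hf.ne (i + 1) (by omega)
  injOn i hi j hj h := Nat.succ_injective (hf.injOn (Set.mem_Iic.mpr (by simp_all))
    (Set.mem_Iic.mpr (by simp_all)) h)
  step i hi := by
    obtain ⟨c', hc', hm⟩ := hf.step (i + 1) (by omega)
    refine ⟨c', ?_, (hm.update fun _ => by simp).update fun h =>
      absurd h (hf.notMem_edge (i := i + 1) (j := 0) (by omega) (by omega) (by omega))⟩
    rwa [update_of_ne (hf.edge_ne (by omega) (by omega) (by omega)),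
      update_of_ne (hf.edge_ne (by omega) (by omega) (by omega))]

theorem IsFan.exists_rotate (hC : Proper C) (hf : IsFan C x f k)
    (hx : Missing C x b) (hk : Missing C (f k) b) :
    ∃ C' : Sym2 V → Option κ, Proper C' ∧
      ∀ e, C' e ≠ none ↔ C e ≠ none ∨ e = s(x, f 0) := by
  classical
  induction k generalizing f C with
  | zero =>
    refine ⟨update C s(x, f 0) (some b), hC.update_some hx hk, fun e => ?_⟩
    rcases eq_or_ne e s(x, f 0) with rfl | he
    · simp
    · simp [he]
  | succ k ih =>
    obtain ⟨c, hc, hm⟩ := hf.step 0 k.succ_pos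
    have hbc : some c ≠ some b := fun h => hx _ (h ▸ hc)
    -- move the colour of `x (f 1)` to `x (f 0)`, then rotate the fan `f 1, …, f (k + 1)`
    obtain ⟨C', hC', hsupp⟩ := ih
      ((hC.update_none _).update_some (hC.missing_update_none hc) (hm.update fun _ => by simp))
      (hf.tail_update _)
      ((hx.update fun _ => by simp).update fun _ => hbc)
      ((hk.update fun _ => by simp).update fun h =>
        absurd h (hf.notMem_edge (i := k + 1) (j := 0) le_rfl (by omega) (by omega)))
    refine ⟨C', hC', fun e => ?_⟩
    rw [hsupp]
    rcases eq_or_ne e s(x, f 0) with rfl | he0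
    · simp
    rcases eq_or_ne e s(x, f 1) with rfl | he1
    · simp [hc, he0]
    · simp [he0, he1]

theorem IsFan.exists_color_of_maximal (hf : IsFan C x f k)
    (hmax : ∀ g : ℕ → V, g 0 = f 0 → ¬ IsFan C x g (k + 1)) (hx : C s(x, x) = none)
    (h0 : C s(x, f 0) = none) (hk : Missing C (f k) c) (hc : ¬ Missing C x c) :
    ∃ i < k, C s(x, f (i + 1)) = some c := by
  classical
  obtain ⟨z, hz⟩ : ∃ z, C s(x, z) = some c := by simpa [Missing] using hc
  have hzx : z ≠ x := by rintro rfl; simp [hx] at hz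
  by_contra! h
  refine hmax _ (update_of_ne (by omega) _ _) (hf.snoc hzx (fun i hi hiz => ?_) hz hk)
  rcases i with _ | i
  · simp [hiz, hz] at h0
  · exact h i (by omega) (hiz ▸ hz)

end Fan

section Extend

variable [DecidableEq κ] {f : ℕ → V} {k : ℕ} {α β : κ}

theorem IsFan.kempeSwap (hf : IsFan C x f k) (hα : Missing C x α)
    (hx : ¬ (kempeGraph C α β).Reachable u x)
    (hβ : ∀ i < k, C s(x, f (i + 1)) = some β → ¬ (kempeGraph C α β).Reachable u (f i)) :
    IsFan (kempeSwap C α β u) x f k where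
  ne := hf.ne
  injOn := hf.injOn
  step i hi := by
    obtain ⟨c, hc, hm⟩ := hf.step i hi
    refine ⟨c, by rw [kempeSwap_apply_of_not_reachable hx, hc], ?_⟩
    obtain rfl | hcβ := eq_or_ne c β
    · exact hm.kempeSwap_of_not_reachable (hβ i hi hc)
    · exact hm.kempeSwap_of_ne (fun h => hα _ (h ▸ hc)) hcβ u

theorem IsFan.exists_extend_of_kempeSwap (hC : Proper C) (hf : IsFan C x f k)
    (hα : Missing C x α) (hβ : Missing C (f k) β)
    (hx : ¬ (kempeGraph C α β).Reachable (f k) x)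
    (hfan : ∀ i < k, C s(x, f (i + 1)) = some β →
      ¬ (kempeGraph C α β).Reachable (f k) (f i)) :
    ∃ C' : Sym2 V → Option κ, Proper C' ∧
      ∀ e, C' e ≠ none ↔ C e ≠ none ∨ e = s(x, f 0) := by
  obtain ⟨C', hC', hsupp⟩ := (hf.kempeSwap hα hx hfan).exists_rotate (hC.kempeSwap (f k))
    (hα.kempeSwap_of_not_reachable hx)
    hβ.kempeSwap_self
  exact ⟨C', hC', fun e => by rw [hsupp, kempeSwap_ne_none_iff]⟩

theorem Proper.exists_extend [Fintype V] (hC : Proper C) (hloop : ∀ v, C s(v, v) = none)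
    (hmiss : ∀ v, ∃ a, Missing C v a) (hxy : x ≠ y) (hxy' : C s(x, y) = none) :
    ∃ C' : Sym2 V → Option κ, Proper C' ∧
      ∀ e, C' e ≠ none ↔ C e ≠ none ∨ e = s(x, y) := by
  classical
  obtain ⟨f, k, rfl, hf, hmax⟩ := exists_maximal_isFan (C := C) hxy.symm
  obtain ⟨α, hα⟩ := hmiss x
  obtain ⟨β, hβ⟩ := hmiss (f k)
  by_cases hβx : Missing C x β
  · exact hf.exists_rotate hC hβx hβ
  obtain ⟨i, hik, hiβ⟩ := hf.exists_color_of_maximal hmax (hloop x) hxy' hβ hβx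
  have hβi : Missing C (f i) β := by
    obtain ⟨c, hc, hm⟩ := hf.step i hik
    rwa [← Option.some_inj.mp (hc.symm.trans hiβ)]
  by_cases hxi : (kempeGraph C α β).Reachable x (f i)
  · have hxk : ¬ (kempeGraph C α β).Reachable x (f k) := fun hxk =>
      hik.ne (hf.injOn (Set.mem_Iic.mpr hik.le) (Set.mem_Iic.mpr le_rfl)
        (Reachable.eq_of_subsingleton_neighborSet hC.eq_or_eq_or_eq_of_kempeGraph_adj
          (hC.subsingleton_neighborSet_kempeGraph (.inl hα))
          (hC.subsingleton_neighborSet_kempeGraph (.inr hβi))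
          (hC.subsingleton_neighborSet_kempeGraph (.inr hβ))
          (hf.ne i hik.le).symm (hf.ne k le_rfl).symm hxi hxk))
    refine hf.exists_extend_of_kempeSwap hC hα hβ (mt .symm hxk) fun j hj hjβ => ?_
    obtain rfl := hf.eq_of_color_eq hC hj hik hjβ hiβ
    exact fun h => hxk (hxi.trans h.symm)
  · refine (hf.mono hik.le).exists_extend_of_kempeSwap hC hα hβi (mt .symm hxi)
      fun j hj hjβ => ?_
    exact absurd (hf.eq_of_color_eq hC (hj.trans hik) hik hjβ hiβ) hj.ne

end Extend

theorem exists_missing_of_degree_lt [Fintype κ] {G : SimpleGraph V}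
    [Fintype (G.neighborSet v)] (hCG : ∀ e, C e ≠ none → e ∈ G.edgeSet)
    (hdeg : G.degree v < Fintype.card κ) :
    ∃ a, Missing C v a := by
  by_contra! h
  simp only [Missing, not_forall, not_not] at h
  choose u hu using h
  have hadj a : G.Adj v (u a) := hCG s(v, u a) (by simp [hu a])
  have : Fintype.card κ ≤ G.degree v := by
    rw [← card_neighborSet_eq_degree]
    refine Fintype.card_le_of_injective (fun a => ⟨u a, hadj a⟩) fun a b h => ?_
    have hab : u a = u b := Subtype.ext_iff.mp h
    exact Option.some_injective _ ((hu a).symm.trans (hab ▸ hu b))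
  omega

theorem exists_proper_of_degree_lt [Fintype V] [Fintype κ] (G : SimpleGraph V)
    [DecidableRel G.Adj] (hdeg : ∀ v, G.degree v < Fintype.card κ) :
    ∃ C : Sym2 V → Option κ, Proper C ∧ ∀ e, C e ≠ none ↔ e ∈ G.edgeSet := by
  classical
  suffices ∀ F : Finset (Sym2 V), ↑F ⊆ G.edgeSet →
      ∃ C : Sym2 V → Option κ, Proper C ∧ ∀ e, C e ≠ none ↔ e ∈ F by
    obtain ⟨C, hC, hsupp⟩ := this G.edgeFinset (by simp)
    exact ⟨C, hC, by simpa using hsupp⟩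
  intro F
  induction F using Finset.induction_on with
  | empty => exact fun _ => ⟨fun _ => none, fun _ _ _ _ h => by simp at h, by simp⟩
  | insert e F he ih =>
    rw [Finset.coe_insert, Set.insert_subset_iff]
    rintro ⟨heG, hFG⟩
    obtain ⟨C, hC, hsupp⟩ := ih hFG
    have hCG e (h : C e ≠ none) : e ∈ G.edgeSet := hFG ((hsupp e).mp h)
    induction e using Sym2.ind with | _ x y => ?_
    obtain ⟨C', hC', hsupp'⟩ := hC.exists_extend
      (fun v => by_contra fun h => G.loopless.irrefl v (hCG _ h))
      (fun v => exists_missing_of_degree_lt hCG (hdeg v)) (G.ne_of_adj heG)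
      (by simpa using mt (hsupp _).mp he)
    exact ⟨C', hC', fun e => by rw [hsupp', hsupp, Finset.mem_insert, or_comm]⟩

end Vizing

namespace SimpleGraph

variable {V : Type*} [Fintype V] (G : SimpleGraph V) [DecidableRel G.Adj]

theorem colorable_lineGraph_of_degree_lt {n : ℕ} (hdeg : ∀ v, G.degree v < n) :
    G.lineGraph.Colorable n := by
  obtain ⟨C, hC, hsupp⟩ :=
    Vizing.exists_proper_of_degree_lt (κ := Fin n) G (by simpa using hdeg)
  have hsome (e : G.edgeSet) : (C e).isSome := Option.ne_none_iff_isSome.mp ((hsupp e).mpr e.2)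
  refine ⟨Coloring.mk (fun e => (C e).get (hsome e)) fun {e₁ e₂} hadj heq => ?_⟩
  obtain ⟨hne, v, hv₁, hv₂⟩ := lineGraph_adj_iff_exists.mp hadj
  obtain ⟨u₁, hu₁⟩ := Sym2.mem_iff_exists.mp hv₁
  obtain ⟨u₂, hu₂⟩ := Sym2.mem_iff_exists.mp hv₂
  have hu : u₁ = u₂ := hC (a := (C e₁).get (hsome e₁)) (by rw [← hu₁, Option.some_get])
    (by rw [← hu₂, heq, Option.some_get])
  exact hne (Subtype.ext (by rw [hu₁, hu₂, hu]))

theorem degree_le_card_of_lineGraph_coloring {κ : Type*} [Fintype κ]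
    (C : G.lineGraph.Coloring κ) (v : V) : G.degree v ≤ Fintype.card κ := by
  rw [← card_neighborSet_eq_degree]
  refine Fintype.card_le_of_injective (fun u => C ⟨s(v, u), u.2⟩) fun u w h => ?_
  by_contra hne
  refine C.valid (lineGraph_adj_iff_exists.mpr ⟨fun h' => hne ?_, v, by simp, by simp⟩) h
  exact Subtype.ext (Sym2.congr_right.mp (Subtype.ext_iff.mp h'))

end SimpleGraph

theorem stmt_10_general {V : Type*} [Fintype V]
    (G : SimpleGraph V) [DecidableRel G.Adj] :
    (∃ c : G.edgeSet → Fin (G.maxDegree + 1), ∀ e₁ e₂ : G.edgeSet, e₁ ≠ e₂ →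
      (∃ v, v ∈ (e₁ : Sym2 V) ∧ v ∈ (e₂ : Sym2 V)) → c e₁ ≠ c e₂) ∧
    (∀ (k : ℕ) (c : G.edgeSet → Fin k),
      (∀ e₁ e₂ : G.edgeSet, e₁ ≠ e₂ →
        (∃ v, v ∈ (e₁ : Sym2 V) ∧ v ∈ (e₂ : Sym2 V)) → c e₁ ≠ c e₂) →
      G.maxDegree ≤ k) := by
  refine ⟨?_, fun k c hc => ?_⟩
  · obtain ⟨C⟩ := G.colorable_lineGraph_of_degree_lt fun v =>
      Nat.lt_succ_of_le (G.degree_le_maxDegree v)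
    exact ⟨C, fun e₁ e₂ hne hv =>
      C.valid (SimpleGraph.lineGraph_adj_iff_exists.mpr ⟨hne, hv⟩)⟩
  · refine G.maxDegree_le_of_forall_degree_le k fun v => ?_
    simpa using G.degree_le_card_of_lineGraph_coloring
      (.mk c fun h => hc _ _ h.1 (SimpleGraph.lineGraph_adj_iff_exists.mp h).2) v

/-- Vizing's theorem: for a simple graph `G`, the chromatic index satisfies
`Δ(G) ≤ χ'(G) ≤ Δ(G) + 1`: there exists a proper edge coloring with `Δ(G) + 1`
colors, and every proper edge coloring uses at least `Δ(G)` colors. -/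
theorem stmt_10 {V : Type*} [Fintype V] [DecidableEq V]
    (G : SimpleGraph V) [DecidableRel G.Adj] :
    (∃ c : G.edgeSet → Fin (G.maxDegree + 1), ∀ e₁ e₂ : G.edgeSet, e₁ ≠ e₂ →
      (∃ v, v ∈ (e₁ : Sym2 V) ∧ v ∈ (e₂ : Sym2 V)) → c e₁ ≠ c e₂) ∧
    (∀ (k : ℕ) (c : G.edgeSet → Fin k),
      (∀ e₁ e₂ : G.edgeSet, e₁ ≠ e₂ →
        (∃ v, v ∈ (e₁ : Sym2 V) ∧ v ∈ (e₂ : Sym2 V)) → c e₁ ≠ c e₂) →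
      G.maxDegree ≤ k) :=
  stmt_10_general G
end
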